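/- Let J*_k be the cost of a charging plan {(b*_ℓ, t*_ℓ)}_{ℓ=k}^N evaluated with estimated waiting times w̃_ℓ^k and Ĵ_k the cost of the same plan evaluated with actual waiting times ŵ_ℓ^k, where w̃_k^k = ŵ_k^k. Then |Ĵ_k − J*_k| ≤ (ξ + γ) Σ_{ℓ=k+1}^N |ŵ_ℓ^k − w̃_ℓ^k|. -/

import Mathlib

/-!
Both cost terms depend on the waiting times only through the weighted sum `S(w) = Σ b_ℓ w_ℓ`:
the energy term is affine in `S` with slope `ξ`, and the lateness penalty is `max (γ (c + S)) 0`,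
which is `γ`-Lipschitz in `S`. So the cost is `(ξ + γ)`-Lipschitz in `S`, and since
`|b_ℓ| ≤ 1` and the `ℓ = k` terms agree, `|S(ŵ) − S(w̃)| ≤ Σ_{ℓ=k+1}^N |ŵ_ℓ − w̃_ℓ|`.
-/

open Finset

theorem abs_sum_mul_le_sum_abs_of_abs_le_one {ι R : Type*} [Ring R] [LinearOrder R]
    [IsOrderedRing R] (s : Finset ι) (b x : ι → R)
    (hb : ∀ i ∈ s, |b i| ≤ 1) : |∑ i ∈ s, b i * x i| ≤ ∑ i ∈ s, |x i| :=
  (abs_sum_le_sum_abs _ _).trans <| sum_le_sum fun i hi => by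
    rw [abs_mul]
    exact mul_le_of_le_one_left (abs_nonneg _) (hb i hi)

theorem Nat.sum_Icc_eq_sum_Icc_succ_of_eq_zero {M : Type*} [AddCommMonoid M] (f : ℕ → M)
    {k : ℕ} (N : ℕ) (hf : f k = 0) : ∑ i ∈ Icc k N, f i = ∑ i ∈ Icc (k + 1) N, f i := by
  rw [Icc_add_one_left_eq_Ioc, ← Icc_erase_left, sum_erase _ hf]

theorem abs_add_max_zero_sub_add_max_zero_le {R : Type*} [CommRing R] [LinearOrder R]
    [IsOrderedRing R] {ξ γ A₁ A₂ B₁ B₂ S : R} (hξ : 0 ≤ ξ) (hγ : 0 ≤ γ)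
    (hA : A₁ - A₂ = ξ * S) (hB : B₁ - B₂ = γ * S) :
    |(A₁ + max B₁ 0) - (A₂ + max B₂ 0)| ≤ (ξ + γ) * |S| :=
  calc |(A₁ + max B₁ 0) - (A₂ + max B₂ 0)| = |ξ * S + (max B₁ 0 - max B₂ 0)| := by
        rw [← hA]; ring_nf
    _ ≤ |ξ * S| + |B₁ - B₂| :=
        (abs_add_le _ _).trans (add_le_add_right (abs_max_sub_max_le_abs B₁ B₂ 0) _)
    _ = (ξ + γ) * |S| := by rw [hB, abs_mul, abs_mul, abs_of_nonneg hξ, abs_of_nonneg hγ]; ring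

theorem cost_error_bound_general
    (k N : ℕ)
    (b t d τ θ wt wh : ℕ → ℝ) (ξ γ ak aend : ℝ)
    (hb : ∀ ℓ, b ℓ = 0 ∨ b ℓ = 1)
    (hξ : 0 ≤ ξ) (hγ : 0 ≤ γ) (hwk : wt k = wh k)
    (J : (ℕ → ℝ) → ℝ)
    (hJ : ∀ w, J w =
      (∑ ℓ ∈ Finset.Icc k N, (ξ * b ℓ * (2 * d ℓ + t ℓ + w ℓ) + θ ℓ * b ℓ * t ℓ)) +
      max (γ * ((ak + ∑ ℓ ∈ Finset.Icc k N,
        (b ℓ * (t ℓ + w ℓ + 2 * d ℓ) + τ ℓ)) - aend)) 0) :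
    |J wh - J wt| ≤ (ξ + γ) * ∑ ℓ ∈ Finset.Icc (k+1) N, |wh ℓ - wt ℓ| := by
  set S := ∑ ℓ ∈ Icc k N, b ℓ * (wh ℓ - wt ℓ)
  have hcharge : ∑ ℓ ∈ Icc k N, (ξ * b ℓ * (2 * d ℓ + t ℓ + wh ℓ) + θ ℓ * b ℓ * t ℓ)
      - ∑ ℓ ∈ Icc k N, (ξ * b ℓ * (2 * d ℓ + t ℓ + wt ℓ) + θ ℓ * b ℓ * t ℓ) = ξ * S := by
    rw [← sum_sub_distrib, mul_sum]
    exact sum_congr rfl fun _ _ => by ring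
  have harrival : ∑ ℓ ∈ Icc k N, (b ℓ * (t ℓ + wh ℓ + 2 * d ℓ) + τ ℓ)
      - ∑ ℓ ∈ Icc k N, (b ℓ * (t ℓ + wt ℓ + 2 * d ℓ) + τ ℓ) = S := by
    rw [← sum_sub_distrib]
    exact sum_congr rfl fun _ _ => by ring
  have hS : |S| ≤ ∑ ℓ ∈ Icc (k + 1) N, |wh ℓ - wt ℓ| :=
    calc |S| ≤ ∑ ℓ ∈ Icc k N, |wh ℓ - wt ℓ| :=
          abs_sum_mul_le_sum_abs_of_abs_le_one _ _ _ fun ℓ _ => by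
            rcases hb ℓ with h | h <;> simp [h]
      _ = ∑ ℓ ∈ Icc (k + 1) N, |wh ℓ - wt ℓ| :=
          Nat.sum_Icc_eq_sum_Icc_succ_of_eq_zero _ N (by simp [hwk])
  rw [hJ, hJ]
  exact (abs_add_max_zero_sub_add_max_zero_le hξ hγ hcharge (by linear_combination γ * harrival)).trans
    (mul_le_mul_of_nonneg_left hS (add_nonneg hξ hγ))

/-- Cost sensitivity to waiting-time estimate errors.  For a fixed charging plan, let
`J(w) = Σ_{ℓ=k}^N [ξ b_ℓ (2 d_ℓ + t_ℓ + w_ℓ) + θ_ℓ b_ℓ t_ℓ] + max{γ(a_{N+1}(w) − a_end), 0}`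
with `a_{N+1}(w) = a_k + Σ_{ℓ=k}^N [b_ℓ(t_ℓ + w_ℓ + 2 d_ℓ) + τ_ℓ]`.  If `wt_k = wh_k`, then
`|J(wh) − J(wt)| ≤ (ξ + γ) Σ_{ℓ=k+1}^N |wh_ℓ − wt_ℓ|`. -/
theorem cost_error_bound
    (k N : ℕ) (hkN : k ≤ N)
    (b t d τ θ wt wh : ℕ → ℝ) (ξ γ ak aend : ℝ)
    (hb : ∀ ℓ, b ℓ = 0 ∨ b ℓ = 1) (ht : ∀ ℓ, 0 ≤ t ℓ) (hd : ∀ ℓ, 0 ≤ d ℓ)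
    (hθ : ∀ ℓ, 0 ≤ θ ℓ) (hwt : ∀ ℓ, 0 ≤ wt ℓ) (hwh : ∀ ℓ, 0 ≤ wh ℓ)
    (hξ : 0 ≤ ξ) (hγ : 0 ≤ γ) (hwk : wt k = wh k)
    (J : (ℕ → ℝ) → ℝ)
    (hJ : ∀ w, J w =
      (∑ ℓ ∈ Finset.Icc k N, (ξ * b ℓ * (2 * d ℓ + t ℓ + w ℓ) + θ ℓ * b ℓ * t ℓ)) +
      max (γ * ((ak + ∑ ℓ ∈ Finset.Icc k N,
        (b ℓ * (t ℓ + w ℓ + 2 * d ℓ) + τ ℓ)) - aend)) 0) :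
    |J wh - J wt| ≤ (ξ + γ) * ∑ ℓ ∈ Finset.Icc (k+1) N, |wh ℓ - wt ℓ| :=
  cost_error_bound_general k N b t d τ θ wt wh ξ γ ak aend hb hξ hγ hwk J hJ
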